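/- arXiv:2411.04240 — 4 statements merged into one kernel-verified Lean document; each statement's English description precedes it below -/
import Mathlib

section
/- For any n×n complex matrices A and B, exp(A+B) = exp(A) + ∫₀¹ exp((1−x)A) · B · exp(x(A+B)) dx, where the integral is the (Bochner) integral of the matrix-valued integrand over [0,1]. -/
/-!
The path `t ↦ exp((1-t)A) exp(t(A+B))` runs from `exp A` to `exp (A+B)`. Differentiating it, the
`A`-terms cancel because `A` commutes with `exp((1-t)A)`, leaving `exp((1-t)A) B exp(t(A+B))`; the
formula is the fundamental theorem of calculus for this path.
-/

open scoped Matrix.Norms.L2Operator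

open NormedSpace

section BanachAlgebra

variable {𝔸 : Type*} [NormedRing 𝔸] [NormedAlgebra ℝ 𝔸] [CompleteSpace 𝔸]

theorem hasDerivAt_exp_smul_mul_exp_smul (A B : 𝔸) (t : ℝ) :
    HasDerivAt (fun s : ℝ => exp ((1 - s) • A) * exp (s • (A + B)))
      (exp ((1 - t) • A) * B * exp (t • (A + B))) t := by
  have hleft : HasDerivAt (fun s : ℝ => exp ((1 - s) • A)) (-(exp ((1 - t) • A) * A)) t := by
    simpa [Function.comp_def] using (hasDerivAt_exp_smul_const (𝕂 := ℝ) A (1 - t)).scomp t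
      ((hasDerivAt_id t).const_sub 1)
  refine (hleft.mul (hasDerivAt_exp_smul_const' (𝕂 := ℝ) (A + B) t)).congr_deriv ?_
  simp only [mul_add, add_mul, neg_mul, mul_assoc]
  abel

theorem exp_add_eq_exp_add_integral (A B : 𝔸) :
    exp (A + B) = exp A + ∫ x in (0 : ℝ)..1, exp ((1 - x) • A) * B * exp (x • (A + B)) := by
  have hexp : Continuous (exp : 𝔸 → 𝔸) :=
    AnalyticOnNhd.continuous (𝕜 := ℝ) fun x _ => exp_analytic x
  have hcont : Continuous fun x : ℝ => exp ((1 - x) • A) * B * exp (x • (A + B)) := by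
    fun_prop
  rw [intervalIntegral.integral_eq_sub_of_hasDerivAt
    (fun x _ => hasDerivAt_exp_smul_mul_exp_smul A B x) (hcont.intervalIntegrable 0 1)]
  simp

end BanachAlgebra

/-- Variation-of-parameters formula for the matrix exponential:
`exp(A+B) = exp(A) + ∫₀¹ exp((1−x)A) · B · exp(x(A+B)) dx`. -/
theorem variation_of_parameters {n : ℕ} (A B : Matrix (Fin n) (Fin n) ℂ) :
    NormedSpace.exp (A + B) =
      NormedSpace.exp A +
        ∫ x in (0:ℝ)..1,
          NormedSpace.exp (((1 - x : ℝ) : ℂ) • A) * B *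
            NormedSpace.exp ((x : ℂ) • (A + B)) := by
  simpa only [Complex.coe_smul] using exp_add_eq_exp_add_integral A B
end

section
/- If t > 0 and 2tλ < 1, then the qDRIFT map 𝓔_t is injective as a linear map on n×n complex matrices (i.e., it has trivial kernel, and hence its matrix logarithm exists). -/
/-!
Each term of `𝓔_t` conjugates by unitaries `U = exp(−iλtHⱼ)`, `V = exp(iλtHⱼ)` with
`‖1 − U‖, ‖1 − V‖ ≤ λt` (mean value inequality for `s ↦ exp(s·A)`, `A` skew-adjoint), and
`B − U B V = (1 − U) B + U B (1 − V)`. Averaging gives `‖B − 𝓔_t B‖ ≤ 2λt ‖B‖ < ‖B‖` for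
`B ≠ 0`, so `𝓔_t` has trivial kernel.
-/

open scoped Matrix.Norms.L2Operator

/-- The qDRIFT map `𝓔_t(B) = ∑ⱼ pⱼ exp(−iλt Hⱼ) B exp(iλt Hⱼ)` with `pⱼ = hⱼ/λ`,
`λ = ∑ⱼ hⱼ`. -/
noncomputable def qDrift {n L : ℕ} (H : Fin L → Matrix (Fin n) (Fin n) ℂ)
    (h : Fin L → ℝ) (t : ℝ) (B : Matrix (Fin n) (Fin n) ℂ) : Matrix (Fin n) (Fin n) ℂ :=
  ∑ j, (((h j / ∑ k, h k : ℝ)) : ℂ) •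
    (NormedSpace.exp ((-Complex.I * ((∑ k, h k : ℝ) : ℂ) * (t : ℂ)) • H j) * B *
      NormedSpace.exp ((Complex.I * ((∑ k, h k : ℝ) : ℂ) * (t : ℂ)) • H j))

open NormedSpace

section CStarAlgebra

variable {A : Type*} [CStarAlgebra A]

lemma exp_mem_unitary_of_mem_skewAdjoint' {a : A} (ha : a ∈ skewAdjoint A) :
    exp a ∈ unitary A :=
  let +nondep : NormedAlgebra ℚ A := .restrictScalars ℚ ℂ A
  exp_mem_unitary_of_mem_skewAdjoint ha

/-- Mean value inequality along `s ↦ exp (s • a)`, whose derivative `exp (s • a) * a` has norm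
`‖a‖` because `exp (s • a)` is unitary. -/
lemma norm_exp_sub_one_le_of_mem_skewAdjoint {a : A} (ha : a ∈ skewAdjoint A) :
    ‖exp a - 1‖ ≤ ‖a‖ := by
  have hderiv (s : ℝ) : HasDerivAt (fun r : ℝ => exp (r • a)) (exp (s • a) * a) s :=
    hasDerivAt_exp_smul_const a s
  have hbound (s : ℝ) : ‖exp (s • a) * a‖ = ‖a‖ :=
    CStarRing.norm_mem_unitary_mul a
      (exp_mem_unitary_of_mem_skewAdjoint' (skewAdjoint.smul_mem s ha))
  simpa using Convex.norm_image_sub_le_of_norm_hasDerivWithin_le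
    (fun s _ => (hderiv s).hasDerivWithinAt) (fun s _ => (hbound s).le) (convex_Icc 0 1)
    (Set.left_mem_Icc.2 zero_le_one) (Set.right_mem_Icc.2 zero_le_one)

lemma norm_one_sub_exp_smul_le {a : A} (ha : IsSelfAdjoint a) {c : ℂ} (hc : c ∈ skewAdjoint ℂ) :
    ‖1 - exp (c • a)‖ ≤ ‖c‖ * ‖a‖ := by
  rw [norm_sub_rev, ← norm_smul]
  exact norm_exp_sub_one_le_of_mem_skewAdjoint (ha.smul_mem_skewAdjoint hc)

end CStarAlgebra

section UnitaryMixture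

variable {A : Type*} [NormedRing A] [StarRing A] [CStarRing A]

lemma norm_sub_mul_mul_le {u : A} (hu : u ∈ unitary A) (b v : A) :
    ‖b - u * b * v‖ ≤ (‖1 - u‖ + ‖1 - v‖) * ‖b‖ := by
  have hsplit : b - u * b * v = (1 - u) * b + u * (b * (1 - v)) := by noncomm_ring
  calc ‖b - u * b * v‖ ≤ ‖(1 - u) * b‖ + ‖b * (1 - v)‖ := by
        rw [hsplit, ← CStarRing.norm_mem_unitary_mul (b * (1 - v)) hu]
        exact norm_add_le _ _
    _ ≤ ‖1 - u‖ * ‖b‖ + ‖b‖ * ‖1 - v‖ := add_le_add (norm_mul_le _ _) (norm_mul_le _ _)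
    _ = (‖1 - u‖ + ‖1 - v‖) * ‖b‖ := by ring

variable [NormedSpace ℂ A] {ι : Type*} [Fintype ι] {p : ι → ℝ} {u v : ι → A} {δ : ℝ}

/-- Writing `b = ∑ i, p i • b`, the distance from `b` to the mixture is a convex combination of
the distances `‖b - u i * b * v i‖`. -/
lemma norm_sub_sum_smul_mul_mul_le (hp : ∀ i, 0 ≤ p i) (hp1 : ∑ i, p i = 1)
    (hu : ∀ i, u i ∈ unitary A) (hδ : ∀ i, ‖1 - u i‖ + ‖1 - v i‖ ≤ δ) (b : A) :
    ‖b - ∑ i, (p i : ℂ) • (u i * b * v i)‖ ≤ δ * ‖b‖ := by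
  have hb : ∑ i, (p i : ℂ) • b = b := by
    rw [← Finset.sum_smul, ← Complex.ofReal_sum, hp1, Complex.ofReal_one, one_smul]
  calc ‖b - ∑ i, (p i : ℂ) • (u i * b * v i)‖
      = ‖∑ i, (p i : ℂ) • (b - u i * b * v i)‖ := by
        simp only [smul_sub, Finset.sum_sub_distrib, hb]
    _ ≤ ∑ i, p i * (δ * ‖b‖) := by
        refine (norm_sum_le _ _).trans (Finset.sum_le_sum fun i _ => ?_)
        rw [norm_smul, Complex.norm_real, Real.norm_of_nonneg (hp i)]
        exact mul_le_mul_of_nonneg_left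
          ((norm_sub_mul_mul_le (hu i) b (v i)).trans
            (mul_le_mul_of_nonneg_right (hδ i) (norm_nonneg b))) (hp i)
    _ = δ * ‖b‖ := by rw [← Finset.sum_mul, hp1, one_mul]

lemma sum_smul_mul_mul_injective (hp : ∀ i, 0 ≤ p i) (hp1 : ∑ i, p i = 1)
    (hu : ∀ i, u i ∈ unitary A) (hδ : ∀ i, ‖1 - u i‖ + ‖1 - v i‖ ≤ δ) (hδ1 : δ < 1) :
    Function.Injective fun b => ∑ i, (p i : ℂ) • (u i * b * v i) := by
  intro x y hxy
  have hker : ∑ i, (p i : ℂ) • (u i * (x - y) * v i) = 0 := by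
    simp only [mul_sub, sub_mul, smul_sub, Finset.sum_sub_distrib]
    exact sub_eq_zero.2 hxy
  have hle := norm_sub_sum_smul_mul_mul_le hp hp1 hu hδ (x - y)
  rw [hker, sub_zero] at hle
  have hnorm : ‖x - y‖ = 0 := by nlinarith [norm_nonneg (x - y)]
  exact sub_eq_zero.1 (norm_eq_zero.1 hnorm)

end UnitaryMixture

lemma I_mul_ofReal_mem_skewAdjoint (s : ℝ) : Complex.I * s ∈ skewAdjoint ℂ := by
  simp [skewAdjoint.mem_iff]

theorem qDrift_injective_general {n L : ℕ} (hL : 1 ≤ L)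
    (H : Fin L → Matrix (Fin n) (Fin n) ℂ)
    (hHerm : ∀ j, (H j).IsHermitian) (hHnorm : ∀ j, ‖H j‖ ≤ 1)
    (h : Fin L → ℝ) (hh : ∀ j, 0 < h j)
    (t : ℝ) (ht : 0 < t) (hts : 2 * t * (∑ j, h j) < 1) :
    Function.Injective (qDrift H h t) := by
  set lam := ∑ k, h k
  have hlam_pos : 0 < lam := Finset.sum_pos (fun j _ => hh j) ⟨⟨0, hL⟩, Finset.mem_univ _⟩
  have hpos : 0 < lam * t := mul_pos hlam_pos ht
  have hminus : -Complex.I * lam * t = Complex.I * (-(lam * t) : ℝ) := by push_cast; ring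
  have hplus : Complex.I * lam * t = Complex.I * (lam * t : ℝ) := by push_cast; ring
  have hexp_close (s : ℝ) (hs : |s| = lam * t) (j : Fin L) :
      ‖1 - exp ((Complex.I * s) • H j)‖ ≤ lam * t := by
    refine (norm_one_sub_exp_smul_le (hHerm j).isSelfAdjoint
      (I_mul_ofReal_mem_skewAdjoint s)).trans ?_
    simpa [hs] using mul_le_mul_of_nonneg_left (hHnorm j) hpos.le
  refine sum_smul_mul_mul_injective (δ := 2 * lam * t)
    (fun j => (div_pos (hh j) hlam_pos).le) (by rw [← Finset.sum_div, div_self hlam_pos.ne'])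
    (fun j => ?_) (fun j => ?_) (by linarith)
  · rw [hminus]
    exact exp_mem_unitary_of_mem_skewAdjoint'
      ((hHerm j).isSelfAdjoint.smul_mem_skewAdjoint (I_mul_ofReal_mem_skewAdjoint _))
  · rw [hminus, hplus]
    linarith [hexp_close (-(lam * t)) (by rw [abs_neg, abs_of_pos hpos]) j,
      hexp_close (lam * t) (abs_of_pos hpos) j]

/-- If `t > 0` and `2tλ < 1`, the qDRIFT map is injective on n×n complex matrices
(it has trivial kernel, hence its matrix logarithm exists). -/
theorem qDrift_injective {n L : ℕ} (hn : 1 ≤ n) (hL : 1 ≤ L)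
    (H : Fin L → Matrix (Fin n) (Fin n) ℂ)
    (hHerm : ∀ j, (H j).IsHermitian) (hHnorm : ∀ j, ‖H j‖ ≤ 1)
    (h : Fin L → ℝ) (hh : ∀ j, 0 < h j)
    (t : ℝ) (ht : 0 < t) (hts : 2 * t * (∑ j, h j) < 1) :
    Function.Injective (qDrift H h t) :=
  qDrift_injective_general hL H hHerm hHnorm h hh t ht hts
end

section
/- For every t ≥ 0 and every n×n complex matrix ρ, ‖𝓔_t(ρ) − exp(−iHt) ρ exp(iHt)‖ ≤ 4(λt)² e^{2λt} ‖ρ‖. In particular the qDRIFT map agrees with the exact Hamiltonian conjugation to first order in t, with second-order error. -/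
/-! Write `exp(−X) ρ exp(X) = ρ + (ρX − Xρ) + R(X)`. With `Xⱼ = iλt Hⱼ` and `pⱼ = hⱼ/λ` we have
`∑ pⱼ Xⱼ = itH`, and the first-order term is linear in `X`, so the qDRIFT error is exactly
`∑ pⱼ R(Xⱼ) − R(itH)`. Comparing with tails of the exponential series gives
`‖R(X)‖ ≤ 2‖X‖² e^{2‖X‖} ‖ρ‖`, and all the `X` involved have norm at most `λt`. -/

open scoped Matrix.Norms.L2Operator

open scoped Nat
open Finset NormedSpace

section BanachAlgebra

variable {𝔸 : Type*} [NormedRing 𝔸] [NormedAlgebra ℝ 𝔸] [CompleteSpace 𝔸]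

theorem norm_exp_sub_sum_le_norm_pow_div_mul_exp (A : 𝔸) {m : ℕ} (hm : 0 < m) :
    ‖exp A - ∑ k ∈ range m, (k !⁻¹ : ℝ) • A ^ k‖ ≤ ‖A‖ ^ m / m ! * Real.exp ‖A‖ := by
  have htail := (hasSum_nat_add_iff' m).2 (exp_series_hasSum_exp' (𝕂 := ℝ) A)
  have hbound := ((exp_series_hasSum_exp' (𝕂 := ℝ) ‖A‖).mul_left (‖A‖ ^ m / m !))
  rw [← Real.exp_eq_exp_ℝ] at hbound
  refine htail.norm_le_of_bounded hbound fun k => ?_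
  have hfact : (k ! * m ! : ℝ) ≤ (k + m)! := by
    exact_mod_cast Nat.le_of_dvd (Nat.factorial_pos _)
      (Nat.factorial_mul_factorial_dvd_factorial_add k m)
  calc ‖((k + m)!⁻¹ : ℝ) • A ^ (k + m)‖
      ≤ ‖A‖ ^ (k + m) / (k + m)! := by
        rw [norm_smul, Real.norm_of_nonneg (by positivity), inv_mul_eq_div]
        gcongr
        exact norm_pow_le' A (by omega)
    _ ≤ ‖A‖ ^ (k + m) / (k ! * m !) := by gcongr
    _ = ‖A‖ ^ m / m ! * ((k !⁻¹ : ℝ) • ‖A‖ ^ k) := by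
        rw [smul_eq_mul, pow_add]; field_simp

theorem norm_exp_sub_one_le (A : 𝔸) : ‖exp A - 1‖ ≤ ‖A‖ * Real.exp ‖A‖ := by
  simpa using norm_exp_sub_sum_le_norm_pow_div_mul_exp A one_pos

theorem norm_exp_sub_one_sub_le (A : 𝔸) : ‖exp A - 1 - A‖ ≤ ‖A‖ ^ 2 / 2 * Real.exp ‖A‖ := by
  simpa [sum_range_succ, sub_sub] using
    norm_exp_sub_sum_le_norm_pow_div_mul_exp A (m := 1 + 1) two_pos

theorem norm_exp_neg_mul_mul_exp_sub_sub_le (A B : 𝔸) :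
    ‖exp (-A) * B * exp A - B - (B * A - A * B)‖ ≤ 2 * ‖A‖ ^ 2 * Real.exp (2 * ‖A‖) * ‖B‖ := by
  have hsplit : exp (-A) * B * exp A - B - (B * A - A * B) =
      (exp (-A) - 1 - -A) * B + B * (exp A - 1 - A) + (exp (-A) - 1) * B * (exp A - 1) := by
    noncomm_ring
  have hS := norm_exp_sub_one_sub_le (-A)
  have hT := norm_exp_sub_one_sub_le A
  have hu := norm_exp_sub_one_le (-A)
  have hv := norm_exp_sub_one_le A
  rw [norm_neg] at hS hu
  have he : 1 ≤ Real.exp ‖A‖ := Real.one_le_exp (norm_nonneg A)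
  rw [hsplit, two_mul ‖A‖, Real.exp_add]
  calc _ ≤ ‖exp (-A) - 1 - -A‖ * ‖B‖ + ‖B‖ * ‖exp A - 1 - A‖
          + ‖exp (-A) - 1‖ * ‖B‖ * ‖exp A - 1‖ := by
        refine (norm_add₃_le).trans (add_le_add_three (norm_mul_le _ _) (norm_mul_le _ _) ?_)
        exact (norm_mul_le _ _).trans (by gcongr; exact norm_mul_le _ _)
    _ ≤ ‖A‖ ^ 2 / 2 * Real.exp ‖A‖ * ‖B‖ + ‖B‖ * (‖A‖ ^ 2 / 2 * Real.exp ‖A‖)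
          + ‖A‖ * Real.exp ‖A‖ * ‖B‖ * (‖A‖ * Real.exp ‖A‖) := by gcongr
    _ = ‖A‖ ^ 2 * Real.exp ‖A‖ * (1 + Real.exp ‖A‖) * ‖B‖ := by ring
    _ ≤ ‖A‖ ^ 2 * Real.exp ‖A‖ * (2 * Real.exp ‖A‖) * ‖B‖ := by gcongr; linarith
    _ = _ := by ring

theorem norm_sum_smul_conj_exp_sub_conj_exp_sum_le {ι : Type*} [Fintype ι] (p : ι → ℝ)
    (hp : ∀ j, 0 ≤ p j) (hp1 : ∑ j, p j = 1) (A : ι → 𝔸) {r : ℝ} (hA : ∀ j, ‖A j‖ ≤ r)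
    (B : 𝔸) :
    ‖∑ j, p j • (exp (-A j) * B * exp (A j)) -
        exp (-∑ j, p j • A j) * B * exp (∑ j, p j • A j)‖ ≤
      4 * r ^ 2 * Real.exp (2 * r) * ‖B‖ := by
  set A₀ := ∑ j, p j • A j
  let R : 𝔸 → 𝔸 := fun X => exp (-X) * B * exp X - B - (B * X - X * B)
  have hR : ∀ X : 𝔸, ‖X‖ ≤ r → ‖R X‖ ≤ 2 * r ^ 2 * Real.exp (2 * r) * ‖B‖ := fun X hX =>
    (norm_exp_neg_mul_mul_exp_sub_sub_le X B).trans (by gcongr)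
  have hA₀ : ‖A₀‖ ≤ r := calc
    ‖A₀‖ ≤ ∑ j, p j * ‖A j‖ := (norm_sum_le _ _).trans_eq <| by
        simp only [norm_smul, Real.norm_of_nonneg (hp _)]
    _ ≤ ∑ j, p j * r := by gcongr with j; exacts [hp j, hA j]
    _ = r := by rw [← sum_mul, hp1, one_mul]
  have hsplit : ∑ j, p j • (exp (-A j) * B * exp (A j)) - exp (-A₀) * B * exp A₀ =
      ∑ j, p j • R (A j) - R A₀ := by
    simp only [R, A₀, smul_sub, sum_sub_distrib, ← sum_smul, hp1, one_smul, mul_sum, sum_mul,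
      mul_smul_comm, smul_mul_assoc]
    abel
  have hsum : ‖∑ j, p j • R (A j)‖ ≤ 2 * r ^ 2 * Real.exp (2 * r) * ‖B‖ := calc
    ‖∑ j, p j • R (A j)‖ ≤ ∑ j, p j * (2 * r ^ 2 * Real.exp (2 * r) * ‖B‖) := by
        refine (norm_sum_le _ _).trans (sum_le_sum fun j _ => ?_)
        rw [norm_smul, Real.norm_of_nonneg (hp j)]
        exact mul_le_mul_of_nonneg_left (hR _ (hA j)) (hp j)
    _ = 2 * r ^ 2 * Real.exp (2 * r) * ‖B‖ := by rw [← sum_mul, hp1, one_mul]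
  rw [hsplit]
  calc _ ≤ ‖∑ j, p j • R (A j)‖ + ‖R A₀‖ := norm_sub_le _ _
    _ ≤ _ := by linarith [hR A₀ hA₀]

end BanachAlgebra

theorem qDrift_error_bound_general {n L : ℕ} (hL : 1 ≤ L)
    (H : Fin L → Matrix (Fin n) (Fin n) ℂ)
    (hHnorm : ∀ j, ‖H j‖ ≤ 1)
    (h : Fin L → ℝ) (hh : ∀ j, 0 < h j)
    (t : ℝ) (ht : 0 ≤ t) (ρ : Matrix (Fin n) (Fin n) ℂ) :
    ‖qDrift H h t ρ -
        NormedSpace.exp ((-Complex.I * (t : ℂ)) • ∑ j, ((h j : ℝ) : ℂ) • H j) * ρ *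
          NormedSpace.exp ((Complex.I * (t : ℂ)) • ∑ j, ((h j : ℝ) : ℂ) • H j)‖ ≤
      4 * ((∑ j, h j) * t) ^ 2 * Real.exp (2 * (∑ j, h j) * t) * ‖ρ‖ := by
  set Λ := ∑ j, h j
  have hΛ : 0 < Λ := sum_pos (fun j _ => hh j) ⟨⟨0, hL⟩, mem_univ _⟩
  set A : Fin L → Matrix (Fin n) (Fin n) ℂ := fun j => (Complex.I * (Λ : ℂ) * (t : ℂ)) • H j
  have hA : ∀ j, ‖A j‖ ≤ Λ * t := fun j => by
    simpa [A, norm_smul, abs_of_pos hΛ, abs_of_nonneg ht] using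
      mul_le_mul_of_nonneg_left (hHnorm j) (mul_nonneg hΛ.le ht)
  have hmix : ∑ j, (h j / Λ) • A j = (Complex.I * (t : ℂ)) • ∑ j, ((h j : ℝ) : ℂ) • H j := by
    simp only [A, smul_sum, smul_smul, ← Complex.coe_smul]
    refine sum_congr rfl fun j _ => ?_
    have hΛℂ : (Λ : ℂ) ≠ 0 := by exact_mod_cast hΛ.ne'
    congr 1
    push_cast
    field_simp
  have hq : qDrift H h t ρ = ∑ j, (h j / Λ) • (exp (-A j) * ρ * exp (A j)) := by
    simp only [qDrift, A, ← Complex.coe_smul, neg_mul, neg_smul]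
    rfl
  rw [hq, neg_mul, neg_smul, ← hmix, mul_assoc 2]
  exact norm_sum_smul_conj_exp_sub_conj_exp_sum_le _ (fun j => (div_pos (hh j) hΛ).le)
    (by rw [← sum_div, div_self hΛ.ne']) A hA ρ

/-- `‖𝓔_t(ρ) − exp(−iHt) ρ exp(iHt)‖ ≤ 4(λt)² e^{2λt} ‖ρ‖`: the qDRIFT map agrees with
the exact Hamiltonian conjugation to first order in `t`, with second-order error. -/
theorem qDrift_error_bound {n L : ℕ} (hn : 1 ≤ n) (hL : 1 ≤ L)
    (H : Fin L → Matrix (Fin n) (Fin n) ℂ)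
    (hHerm : ∀ j, (H j).IsHermitian) (hHnorm : ∀ j, ‖H j‖ ≤ 1)
    (h : Fin L → ℝ) (hh : ∀ j, 0 < h j)
    (t : ℝ) (ht : 0 ≤ t) (ρ : Matrix (Fin n) (Fin n) ℂ) :
    ‖qDrift H h t ρ -
        NormedSpace.exp ((-Complex.I * (t : ℂ)) • ∑ j, ((h j : ℝ) : ℂ) • H j) * ρ *
          NormedSpace.exp ((Complex.I * (t : ℂ)) • ∑ j, ((h j : ℝ) : ℂ) • H j)‖ ≤
      4 * ((∑ j, h j) * t) ^ 2 * Real.exp (2 * (∑ j, h j) * t) * ‖ρ‖ :=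
  qDrift_error_bound_general hL H hHnorm h hh t ht ρ
end

section
/- For every integer m ≥ 1 and every j with 1 ≤ j ≤ m, one has y_m ≥ m² and y_j ≤ 16·m²·y_m; that is, max_j y_j / y_m = O(m²). -/
/-!
Write `θ_j = π(2j−1)/(8m)`, so that `x_j = sin² θ_j` with `0 < θ_j < π/4`. Since `θ_m < π/4`,
`sin θ_m < √2/2` and `k_m ≥ √2 R = 4m/π ≥ m`. By Jordan's inequality `sin θ_j ≥ 2θ_j/π ≥ 1/(4m)`,
so `R / sin θ_j ≤ 4mR ≤ 4m · R / sin θ_m ≤ 4m k_m`; as `4m k_m` is an integer, `k_j ≤ 4m k_m`.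
-/

open Real

noncomputable section

/-- The angle `θ_j` with `x_j = sin² θ_j`. -/
def richardsonAngle (m j : ℕ) : ℝ := π * (2 * (j : ℝ) - 1) / (8 * m)

def richardsonScale (m : ℕ) : ℝ := √8 * m / π

/-- `k_j`, the square root of the node `y_j`. -/
def richardsonNodeRoot (m j : ℕ) : ℕ :=
  ⌈richardsonScale m / √(sin (richardsonAngle m j) ^ 2)⌉₊

end

section

variable {m j : ℕ}

theorem richardsonScale_nonneg (m : ℕ) : 0 ≤ richardsonScale m := by
  unfold richardsonScale; positivity

theorem monotone_richardsonAngle (m : ℕ) : Monotone (richardsonAngle m) := by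
  intro j k hjk
  have : (j : ℝ) ≤ k := by exact_mod_cast hjk
  unfold richardsonAngle
  gcongr

theorem pi_div_eight_mul_le_richardsonAngle (hj : 1 ≤ j) : π / (8 * m) ≤ richardsonAngle m j := by
  have : (1 : ℝ) ≤ j := by exact_mod_cast hj
  unfold richardsonAngle
  gcongr
  nlinarith [pi_pos]

theorem richardsonAngle_pos (hm : 1 ≤ m) (hj : 1 ≤ j) : 0 < richardsonAngle m j := by
  have : (0 : ℝ) < m := by exact_mod_cast hm
  exact (div_pos pi_pos (by positivity)).trans_le (pi_div_eight_mul_le_richardsonAngle hj)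

theorem richardsonAngle_lt_pi_div_four (hm : 1 ≤ m) (hjm : j ≤ m) :
    richardsonAngle m j < π / 4 := by
  have hm' : (0 : ℝ) < m := by exact_mod_cast hm
  have hjm' : (j : ℝ) ≤ m := by exact_mod_cast hjm
  rw [richardsonAngle, div_lt_div_iff₀ (by positivity) (by norm_num)]
  nlinarith [pi_pos]

theorem sin_richardsonAngle_pos (hm : 1 ≤ m) (hj : 1 ≤ j) (hjm : j ≤ m) :
    0 < sin (richardsonAngle m j) :=
  sin_pos_of_pos_of_lt_pi (richardsonAngle_pos hm hj)
    ((richardsonAngle_lt_pi_div_four hm hjm).trans (by linarith [pi_pos]))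

theorem sin_richardsonAngle_lt (hm : 1 ≤ m) (hj : 1 ≤ j) (hjm : j ≤ m) :
    sin (richardsonAngle m j) < √2 / 2 := by
  rw [← sin_pi_div_four]
  refine sin_lt_sin_of_lt_of_le_pi_div_two ?_ (by linarith [pi_pos])
    (richardsonAngle_lt_pi_div_four hm hjm)
  calc -(π / 2) ≤ 0 := by linarith [pi_pos]
    _ ≤ π / (8 * m) := by positivity
    _ ≤ richardsonAngle m j := pi_div_eight_mul_le_richardsonAngle hj

theorem inv_four_mul_le_sin_richardsonAngle (hm : 1 ≤ m) (hj : 1 ≤ j) (hjm : j ≤ m) :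
    1 / (4 * m) ≤ sin (richardsonAngle m j) := by
  have hm' : (0 : ℝ) < m := by exact_mod_cast hm
  have hθ := pi_div_eight_mul_le_richardsonAngle (m := m) hj
  calc 1 / (4 * m) = 2 / π * (π / (8 * m)) := by field_simp; ring
    _ ≤ 2 / π * richardsonAngle m j := by gcongr
    _ ≤ sin (richardsonAngle m j) :=
      mul_le_sin (richardsonAngle_pos hm hj).le
        ((richardsonAngle_lt_pi_div_four hm hjm).le.trans (by linarith [pi_pos]))

theorem richardsonNodeRoot_eq (hm : 1 ≤ m) (hj : 1 ≤ j) (hjm : j ≤ m) :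
    richardsonNodeRoot m j = ⌈richardsonScale m / sin (richardsonAngle m j)⌉₊ := by
  rw [richardsonNodeRoot, sqrt_sq (sin_richardsonAngle_pos hm hj hjm).le]

theorem le_richardsonNodeRoot (hm : 1 ≤ m) (hj : 1 ≤ j) (hjm : j ≤ m) :
    m ≤ richardsonNodeRoot m j := by
  have hm' : (0 : ℝ) < m := by exact_mod_cast hm
  have hsin := sin_richardsonAngle_pos hm hj hjm
  have h8 : √8 = 2 * √2 := by
    rw [show (8 : ℝ) = 2 ^ 2 * 2 by norm_num, sqrt_mul (by norm_num), sqrt_sq (by norm_num)]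
  rw [richardsonNodeRoot_eq hm hj hjm, ← Nat.cast_le (α := ℝ)]
  refine le_trans ?_ (Nat.le_ceil _)
  calc (m : ℝ) ≤ 4 * m / π := by rw [le_div_iff₀ pi_pos]; nlinarith [pi_lt_four]
    _ = richardsonScale m / (√2 / 2) := by
      rw [richardsonScale, h8]; field_simp; ring
    _ ≤ richardsonScale m / sin (richardsonAngle m j) := by
      gcongr
      · exact richardsonScale_nonneg m
      · exact (sin_richardsonAngle_lt hm hj hjm).le

theorem richardsonNodeRoot_le (hm : 1 ≤ m) {i : ℕ} (hi : 1 ≤ i) (him : i ≤ m) (hj : 1 ≤ j)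
    (hjm : j ≤ m) : richardsonNodeRoot m j ≤ 4 * m * richardsonNodeRoot m i := by
  have hm' : (0 : ℝ) < m := by exact_mod_cast hm
  have hR := richardsonScale_nonneg m
  have hsin_i := sin_richardsonAngle_pos hm hi him
  rw [richardsonNodeRoot_eq hm hj hjm, Nat.ceil_le, richardsonNodeRoot_eq hm hi him]
  push_cast
  calc richardsonScale m / sin (richardsonAngle m j)
      ≤ richardsonScale m / (1 / (4 * m)) := by
        gcongr
        exact inv_four_mul_le_sin_richardsonAngle hm hj hjm
    _ = 4 * m * richardsonScale m := by field_simp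
    _ ≤ 4 * m * (richardsonScale m / sin (richardsonAngle m i)) := by
        gcongr
        exact le_div_self hR hsin_i (sin_le_one _)
    _ ≤ 4 * m * ⌈richardsonScale m / sin (richardsonAngle m i)⌉₊ := by
        gcongr
        exact Nat.le_ceil _

end

/-- The well-conditioned Richardson nodes `y_j = ⌈R/√x_j⌉²` with `R = √8·m/π` and
`x_j = sin²(π(2j−1)/(8m))` satisfy `y_m ≥ m²` and `y_j ≤ 16·m²·y_m` for all
`1 ≤ j ≤ m`; that is, `max_j y_j / y_m = O(m²)`. -/
theorem richardson_node_ratio_bound (m j : ℕ) (hm : 1 ≤ m) (hj1 : 1 ≤ j) (hjm : j ≤ m) :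
    m ^ 2 ≤ (⌈(Real.sqrt 8 * m / Real.pi) /
        Real.sqrt (Real.sin (Real.pi * (2 * (m : ℝ) - 1) / (8 * m)) ^ 2)⌉₊) ^ 2 ∧
      (⌈(Real.sqrt 8 * m / Real.pi) /
          Real.sqrt (Real.sin (Real.pi * (2 * (j : ℝ) - 1) / (8 * m)) ^ 2)⌉₊) ^ 2 ≤
        16 * m ^ 2 *
          (⌈(Real.sqrt 8 * m / Real.pi) /
              Real.sqrt (Real.sin (Real.pi * (2 * (m : ℝ) - 1) / (8 * m)) ^ 2)⌉₊) ^ 2 := by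
  show m ^ 2 ≤ richardsonNodeRoot m m ^ 2 ∧
    richardsonNodeRoot m j ^ 2 ≤ 16 * m ^ 2 * richardsonNodeRoot m m ^ 2
  refine ⟨Nat.pow_le_pow_left (le_richardsonNodeRoot hm hm le_rfl) 2, ?_⟩
  calc richardsonNodeRoot m j ^ 2 ≤ (4 * m * richardsonNodeRoot m m) ^ 2 :=
        Nat.pow_le_pow_left (richardsonNodeRoot_le hm hm le_rfl hj1 hjm) 2
    _ = 16 * m ^ 2 * richardsonNodeRoot m m ^ 2 := by ring
end
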